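/- Let p₁, …, p₅ be five pairwise distinct points of ℙ²(ℂ) such that no three of them are collinear, and let q be a nonzero quadratic form on ℂ³ vanishing at all five points. Then q is nondegenerate (the associated bilinear form has trivial radical); i.e., the unique conic through five points in general position is irreducible. -/

import Mathlib

open scoped LinearAlgebra.Projectivization

/-- Three points of `ℙ²(ℂ)` are collinear if some nonzero linear form on `ℂ³` vanishes
at (representative vectors of) all three of them. -/
def CollinearP2 (p₁ p₂ p₃ : ℙ ℂ (Fin 3 → ℂ)) : Prop :=
  ∃ L : (Fin 3 → ℂ) →ₗ[ℂ] ℂ, L ≠ 0 ∧ L p₁.rep = 0 ∧ L p₂.rep = 0 ∧ L p₃.rep = 0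


lemma sq_factor (a b c : ℂ) :
    ∃ α β γ δ : ℂ, ∀ X Y : ℂ, a*X^2 + b*X*Y + c*Y^2 = (α*X+β*Y)*(γ*X+δ*Y) := by
  obtain ⟨s, hs⟩ := IsAlgClosed.exists_pow_nat_eq (k := ℂ) (b^2 - 4*a*c) zero_lt_two
  by_cases ha : a = 0
  · exact ⟨b, c, 0, 1, fun X Y => by subst ha; ring⟩
  · refine ⟨a, (b+s)/2, 1, (b-s)/(2*a), fun X Y => ?_⟩
    have : s^2 = b^2 - 4*a*c := hs
    field_simp
    linear_combination Y^2 * this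

lemma fin3_aux : ∀ i : Fin 3, (∀ m : Fin 3, m = i ∨ m = i+1 ∨ m = i+2) ∧
    i+1 ≠ i ∧ i+2 ≠ i ∧ i+1 ≠ i+2 := by decide

/-- A degenerate nonzero quadratic form on ℂ³ is a product of two nonzero linear forms. -/
lemma degenerate_factor (q : QuadraticForm ℂ (Fin 3 → ℂ)) (hq : q ≠ 0)
    (v : Fin 3 → ℂ) (hv : v ≠ 0)
    (hrad : ∀ w : Fin 3 → ℂ, QuadraticMap.polar (⇑q) v w = 0) :
    ∃ L₁ L₂ : (Fin 3 → ℂ) →ₗ[ℂ] ℂ, L₁ ≠ 0 ∧ L₂ ≠ 0 ∧ ∀ x, q x = L₁ x * L₂ x := by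
  obtain ⟨i, hi⟩ : ∃ i, v i ≠ 0 := by
    by_contra h; push_neg at h; exact hv (funext fun m => h m)
  obtain ⟨hcov, hji, hki, hjk⟩ := fin3_aux i
  set j : Fin 3 := i + 1 with hj
  set k : Fin 3 := i + 2 with hk
  -- q v = 0
  have hqv : q v = 0 := by
    have h := hrad v
    rw [QuadraticMap.polar] at h
    have h2 : v + v = (2:ℂ) • v := (two_smul ℂ v).symm
    rw [h2, QuadraticMap.map_smul] at h
    simp only [smul_eq_mul] at h
    linear_combination h / 2
  -- the two coordinate functionals on the complement of v
  set U : Fin 3 → ((Fin 3 → ℂ) →ₗ[ℂ] ℂ) :=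
    fun m => LinearMap.proj m - (v m / v i) • LinearMap.proj i with hU
  have hUapp : ∀ m x, U m x = x m - (v m / v i) * x i := fun m x => rfl
  set sj : Fin 3 → ℂ := Pi.single j 1 with hsj
  set sk : Fin 3 → ℂ := Pi.single k 1 with hsk
  -- q x = binary quadratic in (U j x, U k x)
  have key : ∀ x, q x = q sj * (U j x)^2 +
      QuadraticMap.polar (⇑q) sj sk * (U j x) * (U k x) + q sk * (U k x)^2 := by
    intro x
    set t : ℂ := x i / v i with ht
    set y : Fin 3 → ℂ := x - t • v with hy
    have hx : x = y + t • v := by rw [hy]; abel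
    have h1 : q x = q y := by
      rw [hx]
      have : q (y + t • v) = q y + q (t • v) + QuadraticMap.polar (⇑q) y (t • v) := by
        rw [QuadraticMap.polar]; ring
      rw [this, QuadraticMap.map_smul, hqv, QuadraticMap.polar_comm,
        QuadraticMap.polar_smul_left (Q := q), hrad]
      simp
    have hym : ∀ m, y m = x m - (v m / v i) * x i := by
      intro m
      simp only [hy, ht, Pi.sub_apply, Pi.smul_apply, smul_eq_mul]; ring
    have hyrep : y = U j x • sj + U k x • sk := by
      funext m
      rw [Pi.add_apply, Pi.smul_apply, Pi.smul_apply, smul_eq_mul, smul_eq_mul, hym m]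
      rcases hcov m with h | h | h <;> subst h
      · rw [hsj, hsk, Pi.single_eq_of_ne hji.symm, Pi.single_eq_of_ne hki.symm]
        field_simp
        ring
      · rw [hsj, hsk, Pi.single_eq_same, Pi.single_eq_of_ne hjk, hUapp j x]
        ring
      · rw [hsj, hsk, Pi.single_eq_same, Pi.single_eq_of_ne hjk.symm, hUapp k x]
        ring
    rw [h1, hyrep]
    have expand : q (U j x • sj + U k x • sk) =
        q (U j x • sj) + q (U k x • sk) +
          QuadraticMap.polar (⇑q) (U j x • sj) (U k x • sk) := by
      rw [QuadraticMap.polar]; ring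
    rw [expand, QuadraticMap.map_smul, QuadraticMap.map_smul,
      QuadraticMap.polar_smul_left (Q := q), QuadraticMap.polar_smul_right (Q := q)]
    simp only [smul_eq_mul]; ring
  obtain ⟨α, β, γ, δ, hfac⟩ := sq_factor (q sj) (QuadraticMap.polar (⇑q) sj sk) (q sk)
  have hprod : ∀ x, q x = (α • U j + β • U k) x * (γ • U j + δ • U k) x := by
    intro x
    rw [key x, hfac]
    simp only [LinearMap.add_apply, LinearMap.smul_apply, smul_eq_mul]
  refine ⟨α • U j + β • U k, γ • U j + δ • U k, ?_, ?_, hprod⟩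
  · intro h0
    apply hq
    ext x
    have := hprod x
    rw [h0] at this
    simpa using this
  · intro h0
    apply hq
    ext x
    have := hprod x
    rw [h0] at this
    simpa using this
/-- If five pairwise distinct points of `ℙ²(ℂ)` have no three collinear, then any
nonzero quadratic form on `ℂ³` vanishing at all five of them is nondegenerate (the associated
symmetric bilinear form, i.e. the polar form, has trivial radical): the unique conic through
five points in general position is irreducible. -/
theorem conic_through_five_general_points_nondegenerate
    (p : Fin 5 → ℙ ℂ (Fin 3 → ℂ))
    (hdist : Function.Injective p)
    (hgen : ∀ i j k : Fin 5, i ≠ j → i ≠ k → j ≠ k → ¬ CollinearP2 (p i) (p j) (p k))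
    (q : QuadraticForm ℂ (Fin 3 → ℂ)) (hq : q ≠ 0)
    (hv : ∀ i : Fin 5, q (p i).rep = 0) :
    ∀ v : Fin 3 → ℂ, (∀ w : Fin 3 → ℂ, QuadraticMap.polar (⇑q) v w = 0) → v = 0 := by
  intro v hrad
  by_contra hv0
  obtain ⟨L₁, L₂, hL1, hL2, hprod⟩ := degenerate_factor q hq v hv0 hrad
  set S₁ : Finset (Fin 5) := Finset.univ.filter (fun i => L₁ (p i).rep = 0) with hS₁
  set S₂ : Finset (Fin 5) := Finset.univ.filter (fun i => L₂ (p i).rep = 0) with hS₂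
  have hmem : ∀ i : Fin 5, i ∈ S₁ ∨ i ∈ S₂ := by
    intro i
    have h0 : L₁ (p i).rep * L₂ (p i).rep = 0 := by rw [← hprod]; exact hv i
    rcases mul_eq_zero.mp h0 with h | h
    · exact Or.inl (by simp [hS₁, h])
    · exact Or.inr (by simp [hS₂, h])
  have hunion : S₁ ∪ S₂ = Finset.univ := by
    ext i
    simpa using hmem i
  have hcard : 5 ≤ S₁.card + S₂.card := by
    have h1 := Finset.card_union_le S₁ S₂
    rw [hunion] at h1
    simpa using h1
  have hbig : 2 < S₁.card ∨ 2 < S₂.card := by omega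
  rcases hbig with h | h
  · obtain ⟨a, b, c, ha, hb, hc, hab, hac, hbc⟩ := Finset.two_lt_card_iff.mp h
    simp only [hS₁, Finset.mem_filter, Finset.mem_univ, true_and] at ha hb hc
    exact hgen a b c hab hac hbc ⟨L₁, hL1, ha, hb, hc⟩
  · obtain ⟨a, b, c, ha, hb, hc, hab, hac, hbc⟩ := Finset.two_lt_card_iff.mp h
    simp only [hS₂, Finset.mem_filter, Finset.mem_univ, true_and] at ha hb hc
    exact hgen a b c hab hac hbc ⟨L₂, hL2, ha, hb, hc⟩
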